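/- If M ≥ 3 and 0 < φₘ < 0.431, then ψₘ > sin φₘ / α₀ and φₘ > sin φₘ / α₁, where ψₘ = arccos(2 cos φₘ / M), α₀ = cos φₘ / 2, α₁ = 3 cos φₘ / 2. -/

import Mathlib

/-!
Substituting `α₀`, `α₁`, the two claims read `2 tan φ < ψ` and `3 φ cos φ > 2 sin φ`. The second
follows from `sin φ < φ` and `cos φ ≥ 1 - φ² / 2 > 2 / 3`. For the first, `arccos` is
antitone, so it suffices that `2 tan φ < arccos (2 cos φ / 3)`, i.e. `2 cos φ < 3 cos (2 tan φ)`.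
With `t = tan φ` and `cos² φ = 1 / (1 + t²)` this becomes `4 < 9 cos² (2t) (1 + t²)`, which is
tight at `φ = 0.431` (a margin of about 0.3%): it is proved with the degree-six Taylor lower
bound of `cos`, both to get `t² ≤ 0.2115` and to bound `cos (2t)` from below.
-/

open Real

/-- The degree-six Taylor polynomial of `cos` at `√s`, minus the eight-term remainder bound
`s ^ 4 * 9 / (8! * 8)` of `Complex.exp_bound`. -/
noncomputable def cosTaylorLower (s : ℝ) : ℝ :=
  1 - s / 2 + s ^ 2 / 24 - s ^ 3 / 720 - s ^ 4 / 35840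

lemma cosTaylorLower_sq_le_cos {x : ℝ} (hx : |x| ≤ 1) : cosTaylorLower (x ^ 2) ≤ cos x := by
  have hxI : ‖(x : ℂ) * Complex.I‖ ≤ 1 := by simpa using hx
  have h := (Complex.abs_re_le_norm _).trans (Complex.exp_bound hxI (n := 8) (by norm_num))
  have hsum : (∑ m ∈ Finset.range 8, ((x : ℂ) * Complex.I) ^ m / m.factorial).re
      = 1 - x ^ 2 / 2 + x ^ 4 / 24 - x ^ 6 / 720 := by
    simp [Finset.sum_range_succ, Nat.factorial, pow_succ]
    ring
  rw [Complex.sub_re, Complex.exp_ofReal_mul_I_re, hsum] at h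
  norm_num [Nat.factorial, (by decide : Even 8).pow_abs] at h
  unfold cosTaylorLower
  linarith [(abs_le.1 h).1]

lemma cosTaylorLower_ge {s : ℝ} (hs₀ : 0 ≤ s) (hs : s ≤ 0.431 ^ 2) :
    0.90853 ≤ cosTaylorLower s := by
  unfold cosTaylorLower
  nlinarith [mul_nonneg hs₀ hs₀, pow_nonneg hs₀ 3, pow_nonneg hs₀ 4]

lemma cosTaylorLower_pos {s : ℝ} (hs₀ : 0 ≤ s) (hs : s ≤ 1) : 0 < cosTaylorLower s := by
  unfold cosTaylorLower
  nlinarith [mul_nonneg hs₀ hs₀, pow_nonneg hs₀ 3, pow_nonneg hs₀ 4]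

lemma four_lt_nine_mul_cosTaylorLower_sq {s : ℝ} (hs₀ : 0 ≤ s) (hs : s ≤ 0.2115) :
    4 < 9 * cosTaylorLower (4 * s) ^ 2 * (1 + s) := by
  unfold cosTaylorLower
  nlinarith [mul_nonneg hs₀ hs₀, pow_nonneg hs₀ 3, pow_nonneg hs₀ 4,
    mul_nonneg (sub_nonneg.2 hs) hs₀]

section

variable {φ : ℝ} (h₀ : 0 < φ) (h₁ : φ < 0.431)
include h₀ h₁

lemma cos_pos_of_lt_0431 : 0 < cos φ :=
  cos_pos_of_mem_Ioo ⟨by linarith [pi_gt_three], by linarith [pi_gt_three]⟩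

lemma tan_sq_le_of_lt_0431 : tan φ ^ 2 ≤ 0.2115 := by
  have hc := cos_pos_of_lt_0431 h₀ h₁
  have hcos : 0.90853 ≤ cos φ :=
    (cosTaylorLower_ge (sq_nonneg φ) (by gcongr)).trans
      (cosTaylorLower_sq_le_cos (by rw [abs_of_pos h₀]; linarith))
  have hpyth := one_add_tan_sq_mul_cos_sq_eq_one hc.ne'
  nlinarith

lemma two_mul_cos_lt_three_mul_cos_two_mul_tan : 2 * cos φ < 3 * cos (2 * tan φ) := by
  have hc := cos_pos_of_lt_0431 h₀ h₁
  have ht := tan_sq_le_of_lt_0431 h₀ h₁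
  have hcos2t : cosTaylorLower (4 * tan φ ^ 2) ≤ cos (2 * tan φ) := by
    have h2t : |2 * tan φ| ≤ 1 := by
      rw [← sq_le_one_iff_abs_le_one]
      linarith
    simpa [mul_pow, show (2 : ℝ) ^ 2 = 4 by norm_num] using cosTaylorLower_sq_le_cos h2t
  have hkey := four_lt_nine_mul_cosTaylorLower_sq (sq_nonneg (tan φ)) ht
  have hpos := cosTaylorLower_pos (by positivity) (by linarith : 4 * tan φ ^ 2 ≤ 1)
  have hsq : (2 * cos φ) ^ 2 < (3 * cos (2 * tan φ)) ^ 2 := by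
    have hpyth := one_add_tan_sq_mul_cos_sq_eq_one hc.ne'
    have := pow_le_pow_left₀ hpos.le hcos2t 2
    nlinarith [sq_nonneg (tan φ)]
  exact lt_of_pow_lt_pow_left₀ 2 (by linarith) hsq

lemma two_mul_tan_lt_arccos : 2 * tan φ < arccos (2 * cos φ / 3) := by
  have hc := cos_pos_of_lt_0431 h₀ h₁
  have ht : 0 ≤ 2 * tan φ := by
    have := tan_pos_of_pos_of_lt_pi_div_two h₀ (by linarith [pi_gt_three])
    linarith
  have ht' : 2 * tan φ ≤ π := by
    nlinarith [tan_sq_le_of_lt_0431 h₀ h₁, pi_gt_three]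
  calc 2 * tan φ = arccos (cos (2 * tan φ)) := (arccos_cos ht ht').symm
    _ < arccos (2 * cos φ / 3) :=
      arccos_lt_arccos (by linarith) (by linarith [two_mul_cos_lt_three_mul_cos_two_mul_tan h₀ h₁])
        (cos_le_one _)

lemma sin_div_lt_of_lt_0431 : sin φ / (3 * cos φ / 2) < φ := by
  have hc := cos_pos_of_lt_0431 h₀ h₁
  rw [div_lt_iff₀ (by linarith)]
  nlinarith [sin_lt h₀, one_sub_sq_div_two_le_cos (x := φ)]

end

/-- If `M ≥ 3` and `0 < φₘ < 0.431`, then `ψₘ > sin φₘ / α₀` and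
`φₘ > sin φₘ / α₁`, where `ψₘ = arccos (2 cos φₘ / M)`, `α₀ = cos φₘ / 2`,
`α₁ = 3 cos φₘ / 2`. -/
theorem tracking_angle_conditions
    (M φₘ : ℝ) (hM : 3 ≤ M) (hφ : φₘ ∈ Set.Ioo (0:ℝ) 0.431)
    (ψₘ α₀ α₁ : ℝ)
    (hψₘ : ψₘ = Real.arccos (2 * Real.cos φₘ / M))
    (hα₀ : α₀ = Real.cos φₘ / 2)
    (hα₁ : α₁ = 3 * Real.cos φₘ / 2) :
    ψₘ > Real.sin φₘ / α₀ ∧ φₘ > Real.sin φₘ / α₁ := by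
  obtain ⟨h₀, h₁⟩ := hφ
  have hc := cos_pos_of_lt_0431 h₀ h₁
  refine ⟨?_, hα₁ ▸ sin_div_lt_of_lt_0431 h₀ h₁⟩
  calc sin φₘ / α₀ = 2 * tan φₘ := by
        rw [hα₀, tan_eq_sin_div_cos]
        field_simp
    _ < arccos (2 * cos φₘ / 3) := two_mul_tan_lt_arccos h₀ h₁
    _ ≤ ψₘ := hψₘ ▸ arccos_le_arccos (by gcongr)
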